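/- Let k be a positive integer and consider the market with D = {d₁, d₂}, H = {h₁, h₂}, 𝐗 = {x¹, …, x^k, w}, where x^i_D = d₁ and x^i_H = h₁ for i = 1, …, k, and w_D = d₂, w_H = h₂; hospital preferences ≻_{h₁}: {x^k} ≻ {x^{k−1}} ≻ ⋯ ≻ {x¹} ≻ ∅ (only singletons acceptable) and ≻_{h₂}: {w} ≻ ∅. Let P₁ be d₁'s preference {x¹} P₁ {x²} P₁ ⋯ P₁ {x^k} P₁ ∅. Then for any preference P₂ of d₂: if {w} P₂ ∅, the set of stable allocations at (P₁,P₂) is exactly {{x^j, w} : 1 ≤ j ≤ k}, and if ∅ P₂ {w}, it is exactly {{x^j} : 1 ≤ j ≤ k}. -/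

import Mathlib

set_option linter.unusedSectionVars false

namespace Matching

open Finset

/-- A many-to-one matching market with contracts: each contract `x` involves exactly one
doctor `xD x` and one hospital `xH x`; each hospital `h` has a fixed antisymmetric,
transitive and complete preference `prH h`, modelled as a linear order on sets of
contracts (only its comparisons between allocations of contracts involving `h` matter). -/
structure Market (D H X : Type*) where
  xD : X → D
  xH : X → H
  prH : H → LinearOrder (Finset X)

/-- A doctor's preference: an antisymmetric, transitive and complete preference, modelled
as a linear order on sets of contracts (only comparisons between `∅` and singletons of
contracts involving the doctor matter). -/
abbrev Pref (X : Type*) := LinearOrder (Finset X)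

/-- A profile of doctors' preferences. -/
abbrev Profile (D X : Type*) := D → Pref X

variable {D H X : Type*}
variable [DecidableEq D] [DecidableEq H] [DecidableEq X] [Fintype D] [Fintype H] [Fintype X]

/-- `Y_d` : the contracts in `Y` involving doctor `d`. -/
def docPart (M : Market D H X) (Y : Finset X) (d : D) : Finset X :=
  Y.filter fun x => M.xD x = d

/-- `Y_h` : the contracts in `Y` involving hospital `h`. -/
def hospPart (M : Market D H X) (Y : Finset X) (h : H) : Finset X :=
  Y.filter fun x => M.xH x = h

/-- An allocation: distinct contracts involve distinct doctors. -/
def IsAllocation (M : Market D H X) (Z : Finset X) : Prop :=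
  ∀ x ∈ Z, ∀ y ∈ Z, M.xD x = M.xD y → x = y

/-- `A(Y)` : the allocations contained in `Y`. -/
def allocs (M : Market D H X) (Y : Finset X) : Finset (Finset X) :=
  Y.powerset.filter fun Z => ∀ x ∈ Z, ∀ y ∈ Z, M.xD x = M.xD y → x = y

lemma empty_mem_allocs (M : Market D H X) (Y : Finset X) : ∅ ∈ allocs M Y := by
  simp [allocs]

/-- The best allocation contained in `Y` according to the linear order `pr`. -/
def bestAlloc (M : Market D H X) (pr : Pref X) (Y : Finset X) : Finset X :=
  @Finset.max' _ pr (allocs M Y) ⟨∅, empty_mem_allocs M Y⟩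

/-- `C_h(Y)` : hospital `h`'s choice set from `Y` (the `≻_h`-maximum of `A(Y_h)`). -/
def Ch (M : Market D H X) (h : H) (Y : Finset X) : Finset X :=
  bestAlloc M (M.prH h) (hospPart M Y h)

/-- `C_d(P_d, Y)` : doctor `d`'s choice set from `Y` (the `P_d`-maximum of `A(Y_d)`). -/
def Cd (M : Market D H X) (Pd : Pref X) (d : D) (Y : Finset X) : Finset X :=
  bestAlloc M Pd (docPart M Y d)

/-- `C_H(Y) = ∪_{h ∈ H} C_h(Y)`. -/
def CH (M : Market D H X) (Y : Finset X) : Finset X :=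
  univ.biUnion fun h => Ch M h Y

/-- `C_D(Y) = ∪_{d ∈ D} C_d(Y)`. -/
def CD (M : Market D H X) (P : Profile D X) (Y : Finset X) : Finset X :=
  univ.biUnion fun d => Cd M (P d) d Y

/-- Substitutability of hospital `h`'s preference: `x ∈ C_h(W)` and `x ∈ Y_h ⊆ W_h`
imply `x ∈ C_h(Y)`. -/
def Substitutable (M : Market D H X) (h : H) : Prop :=
  ∀ W Y : Finset X, hospPart M Y h ⊆ hospPart M W h →
    ∀ x ∈ hospPart M Y h, x ∈ Ch M h W → x ∈ Ch M h Y

/-- The sets `X^t` of still-available contracts in the doctor-proposing deferred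
acceptance algorithm (0-based: index `t` corresponds to iteration `t+1`). -/
def DDAsets (M : Market D H X) (P : Profile D X) : ℕ → Finset X
  | 0 => univ
  | t + 1 =>
      DDAsets M P t \ (CD M P (DDAsets M P t) \ CH M (CD M P (DDAsets M P t)))

/-- `O^t` : the offers made by the doctors at iteration `t` of D-DA (0-based). -/
def offers (M : Market D H X) (P : Profile D X) (t : ℕ) : Finset X :=
  CD M P (DDAsets M P t)

/-- `O_A^t = ∪_{k ≤ t} O^k` : the accumulated offers up to iteration `t` (0-based). -/
def accOffers (M : Market D H X) (P : Profile D X) (t : ℕ) : Finset X :=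
  (Finset.range (t + 1)).biUnion fun k => offers M P k

/-- D-DA has stopped at iteration `t`: all offers are accepted. -/
def DDAstopped (M : Market D H X) (P : Profile D X) (t : ℕ) : Prop :=
  CH M (offers M P t) = offers M P t

/-- The (0-based) last iteration of D-DA, i.e. `T - 1` where `T` is the number of
iterations of D-DA. -/
noncomputable def DDAlast (M : Market D H X) (P : Profile D X) : ℕ :=
  sInf {t | DDAstopped M P t}

/-- The output of D-DA (the algorithm provably stops by iteration `Fintype.card X`,
and once stopped the offer sets stay constant). -/
def DDAoutput (M : Market D H X) (P : Profile D X) : Finset X :=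
  CH M (offers M P (Fintype.card X))

/-- The doctor-optimal rule `φ̄`, giving doctor `d`'s outcome `φ̄_d(P)` (an element of
`A(𝐗_d)`, i.e. `∅` or a singleton). -/
def docOpt (M : Market D H X) (P : Profile D X) (d : D) : Finset X :=
  docPart M (DDAoutput M P) d

/-- The sets `X^t` of still-available contracts in the hospital-proposing deferred
acceptance algorithm (0-based). -/
def HDAsets (M : Market D H X) (P : Profile D X) : ℕ → Finset X
  | 0 => univ
  | t + 1 =>
      HDAsets M P t \ (CH M (HDAsets M P t) \ CD M P (CH M (HDAsets M P t)))

/-- The offers made by the hospitals at iteration `t` of H-DA (0-based). -/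
def hOffers (M : Market D H X) (P : Profile D X) (t : ℕ) : Finset X :=
  CH M (HDAsets M P t)

/-- The output of H-DA. -/
def HDAoutput (M : Market D H X) (P : Profile D X) : Finset X :=
  CD M P (hOffers M P (Fintype.card X))

/-- The hospital-optimal rule `φ̲`, giving doctor `d`'s outcome `φ̲_d(P)`. -/
def hospOpt (M : Market D H X) (P : Profile D X) (d : D) : Finset X :=
  docPart M (HDAoutput M P) d

/-- The option set `O^φ(P_d)` left open by `P_d` at the rule `φ`. -/
def optionSet (rule : Profile D X → D → Finset X) (d : D) (Pd : Pref X) :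
    Set (Finset X) :=
  {S | ∃ P : Profile D X, P d = Pd ∧ S = rule P d}

open scoped Classical in
/-- `W_d(pr, S)` : the `pr`-worst element of the (finite) set `S` of outcomes. -/
noncomputable def worstIn (pr : Pref X) (S : Set (Finset X)) : Finset X :=
  if h : S.Nonempty then
    @Finset.min' _ pr (Set.toFinite S).toFinset ((Set.Finite.toFinset_nonempty _).mpr h)
  else ∅

open scoped Classical in
/-- The `pr`-best element of the (finite) set `S` of outcomes. -/
noncomputable def bestIn (pr : Pref X) (S : Set (Finset X)) : Finset X :=
  if h : S.Nonempty then
    @Finset.max' _ pr (Set.toFinite S).toFinset ((Set.Finite.toFinset_nonempty _).mpr h)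
  else ∅

/-- `P'_d` is a manipulation of the rule at `P_d` : for some subprofile of the other
doctors, reporting `P'_d` gives a strictly `P_d`-better outcome than truth-telling. -/
def IsManip (rule : Profile D X → D → Finset X) (d : D) (Pd P'd : Pref X) : Prop :=
  ∃ P : Profile D X, P d = Pd ∧
    Pd.lt (rule P d) (rule (Function.update P d P'd) d)

/-- `P'_d` is an obvious manipulation of the rule at `P_d`. -/
def IsObviousManip (rule : Profile D X → D → Finset X) (d : D) (Pd P'd : Pref X) :
    Prop :=
  IsManip rule d Pd P'd ∧
    (Pd.lt (worstIn Pd (optionSet rule d Pd)) (worstIn Pd (optionSet rule d P'd)) ∨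
     Pd.lt (bestIn Pd (optionSet rule d Pd)) (bestIn Pd (optionSet rule d P'd)))

/-- A rule is not obviously manipulable (NOM). -/
def NOM (rule : Profile D X → D → Finset X) : Prop :=
  ∀ (d : D) (Pd P'd : Pref X), ¬ IsObviousManip rule d Pd P'd

/-- A rule is obviously manipulable (OM). -/
def OM (rule : Profile D X → D → Finset X) : Prop :=
  ∃ (d : D) (Pd P'd : Pref X), IsObviousManip rule d Pd P'd

/-- `Y` is a stable allocation at the profile `P` : it is an individually rational
allocation and admits no blocking contract. -/
def IsStable (M : Market D H X) (P : Profile D X) (Y : Finset X) : Prop :=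
  IsAllocation M Y ∧ CD M P Y = Y ∧ CH M Y = Y ∧
    ∀ x : X, x ∉ Y →
      ¬ (x ∈ Cd M (P (M.xD x)) (M.xD x) (insert x Y) ∧
         x ∈ Ch M (M.xH x) (insert x Y))

/-- `⌈kq⌉` where `k` is the number of stable allocations at `P`. -/
noncomputable def quantileIndex (M : Market D H X) (P : Profile D X) (q : ℝ) : ℕ :=
  ⌈(Set.ncard {Y : Finset X | IsStable M P Y} : ℝ) * q⌉₊

/-- `Z` is doctor `d`'s `⌈kq⌉`-th best outcome (according to `P d`) among the `k` stable
allocations at `P` : it is the outcome of some stable allocation, strictly fewer than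
`⌈kq⌉` stable allocations give `d` a strictly better outcome, and at least `⌈kq⌉` stable
allocations give `d` a weakly better outcome. -/
def IsQuantileOutcome (M : Market D H X) (P : Profile D X) (q : ℝ) (d : D)
    (Z : Finset X) : Prop :=
  (∃ Y : Finset X, IsStable M P Y ∧ docPart M Y d = Z) ∧
    Set.ncard {Y : Finset X | IsStable M P Y ∧ (P d).lt Z (docPart M Y d)} <
      quantileIndex M P q ∧
    quantileIndex M P q ≤
      Set.ncard {Y : Finset X | IsStable M P Y ∧ (P d).le Z (docPart M Y d)}

/-!
In a stable allocation `d₁` must hold some `x^j`, since otherwise `d₁` and `h₁` would block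
with any `x^i`, and `w` is signed exactly when `d₂` finds it acceptable. Conversely every such
allocation is stable: faced with `x^i` and `x^j`, `h₁` keeps the one of larger index and `d₁`
the one of smaller index, so they never both choose the newcomer `x^i`.
-/

section BestAlloc

variable (M : Market D H X) (pr : Pref X)

lemma mem_allocs {Y Z : Finset X} : Z ∈ allocs M Y ↔ Z ⊆ Y ∧ IsAllocation M Z := by
  simp [allocs, IsAllocation]

lemma isAllocation_singleton (a : X) : IsAllocation M {a} := by
  simp [IsAllocation]

lemma bestAlloc_mem (Y : Finset X) : bestAlloc M pr Y ∈ allocs M Y :=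
  @max'_mem _ pr _ _

lemma bestAlloc_subset (Y : Finset X) : bestAlloc M pr Y ⊆ Y :=
  ((mem_allocs M).1 (bestAlloc_mem M pr Y)).1

lemma bestAlloc_empty : bestAlloc M pr ∅ = ∅ :=
  subset_empty.1 (bestAlloc_subset M pr ∅)

lemma bestAlloc_eq_of_forall_le {Y Z : Finset X} (hZ : Z ∈ allocs M Y)
    (hmax : ∀ W ∈ allocs M Y, pr.le W Z) : bestAlloc M pr Y = Z :=
  pr.le_antisymm _ _ (hmax _ (bestAlloc_mem M pr Y)) (@le_max' _ pr _ _ hZ)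

variable {M pr}

lemma eq_empty_or_singleton_of_mem_allocs {Y W : Finset X} {d : D}
    (hY : ∀ x ∈ Y, M.xD x = d) (hW : W ∈ allocs M Y) : W = ∅ ∨ ∃ c ∈ Y, W = {c} := by
  obtain ⟨hWY, hW⟩ := (mem_allocs M).1 hW
  obtain rfl | ⟨c, hc⟩ := W.eq_empty_or_nonempty
  · exact Or.inl rfl
  refine Or.inr ⟨c, hWY hc, eq_singleton_iff_unique_mem.2 ⟨hc, fun x hx => ?_⟩⟩
  exact hW x hx c hc ((hY x (hWY hx)).trans (hY c (hWY hc)).symm)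

lemma bestAlloc_eq_singleton {Y : Finset X} {d : D} {a : X} (hY : ∀ x ∈ Y, M.xD x = d)
    (ha : a ∈ Y) (h0 : pr.lt ∅ {a}) (hle : ∀ c ∈ Y, pr.le {c} {a}) :
    bestAlloc M pr Y = {a} := by
  refine bestAlloc_eq_of_forall_le M pr
    ((mem_allocs M).2 ⟨singleton_subset_iff.2 ha, isAllocation_singleton M a⟩) fun W hW => ?_
  obtain rfl | ⟨c, hc, rfl⟩ := eq_empty_or_singleton_of_mem_allocs hY hW
  · exact @le_of_lt _ pr.toPreorder _ _ h0
  · exact hle c hc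

lemma bestAlloc_singleton_of_lt {a : X} (h : pr.lt ∅ {a}) : bestAlloc M pr {a} = {a} :=
  bestAlloc_eq_singleton (d := M.xD a) (by simp) (mem_singleton_self a) h (by simp)

lemma bestAlloc_inter_singleton_of_lt {a : X} (h : pr.lt ∅ {a}) (Y : Finset X) :
    bestAlloc M pr (Y ∩ {a}) = Y ∩ {a} := by
  by_cases ha : a ∈ Y
  · rw [inter_singleton_of_mem ha, bestAlloc_singleton_of_lt h]
  · rw [inter_singleton_of_notMem ha, bestAlloc_empty]

lemma bestAlloc_inter_singleton_of_not_lt {a : X} (h : ¬ pr.lt ∅ {a}) (Y : Finset X) :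
    bestAlloc M pr (Y ∩ {a}) = ∅ := by
  refine bestAlloc_eq_of_forall_le M pr (empty_mem_allocs M _) fun W hW => ?_
  obtain rfl | ⟨c, hc, rfl⟩ :=
    eq_empty_or_singleton_of_mem_allocs (d := M.xD a) (by simp +contextual) hW
  · exact pr.le_refl ∅
  · rw [mem_singleton.1 (mem_inter.1 hc).2]
    exact (@not_lt _ pr _ _).1 h

end BestAlloc

lemma CD_fin_two (M : Market (Fin 2) H X) (P : Profile (Fin 2) X) (Y : Finset X) :
    CD M P Y = Cd M (P 0) 0 Y ∪ Cd M (P 1) 1 Y := by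
  ext x
  simp [CD, Fin.exists_fin_two]

lemma CH_fin_two (M : Market D (Fin 2) X) (Y : Finset X) :
    CH M Y = Ch M 0 Y ∪ Ch M 1 Y := by
  ext x
  simp [CH, Fin.exists_fin_two]

lemma filter_eq_erase_none {α β : Type*} [DecidableEq α] [DecidableEq β]
    {f : Option α → β} {b : β}
    (hsome : ∀ i, f (some i) = b) (hnone : f none ≠ b) (Y : Finset (Option α)) :
    Y.filter (fun x => f x = b) = Y.erase none := by
  ext x
  cases x <;> simp [hsome, hnone]

lemma filter_eq_inter_none {α β : Type*} [DecidableEq α] [DecidableEq β]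
    {f : Option α → β} {b : β}
    (hsome : ∀ i, f (some i) ≠ b) (hnone : f none = b) (Y : Finset (Option α)) :
    Y.filter (fun x => f x = b) = Y ∩ {none} := by
  ext x
  cases x <;> simp [hsome, hnone]

lemma erase_eq_singleton_and_mem_iff {α : Type*} [DecidableEq α] {s : Finset α} {a b : α}
    (hba : b ≠ a) : s.erase a = {b} ∧ a ∈ s ↔ s = {b, a} := by
  constructor
  · rintro ⟨h, ha⟩
    rw [← insert_erase ha, h, pair_comm]
  · rintro rfl
    simp [erase_insert_of_ne hba]

lemma erase_eq_singleton_and_notMem_iff {α : Type*} [DecidableEq α] {s : Finset α} {a b : α}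
    (hba : b ≠ a) : s.erase a = {b} ∧ a ∉ s ↔ s = {b} := by
  constructor
  · rintro ⟨h, ha⟩
    rw [← h, erase_eq_of_notMem ha]
  · rintro rfl
    simp [hba.symm]

structure IsExampleMarket {k : ℕ} (M : Market (Fin 2) (Fin 2) (Option (Fin k))) : Prop where
  xD_some : ∀ i, M.xD (some i) = 0
  xD_none : M.xD none = 1
  xH_some : ∀ i, M.xH (some i) = 0
  xH_none : M.xH none = 1

namespace IsExampleMarket

variable {k : ℕ} {M : Market (Fin 2) (Fin 2) (Option (Fin k))} {pr : Pref (Option (Fin k))}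
  {P : Profile (Fin 2) (Option (Fin k))} {Y : Finset (Option (Fin k))} {i j : Fin k}

lemma docPart_zero (hM : IsExampleMarket M) (Y : Finset (Option (Fin k))) :
    docPart M Y 0 = Y.erase none :=
  filter_eq_erase_none hM.xD_some (by simp [hM.xD_none]) Y

lemma docPart_one (hM : IsExampleMarket M) (Y : Finset (Option (Fin k))) :
    docPart M Y 1 = Y ∩ {none} :=
  filter_eq_inter_none (by simp [hM.xD_some]) hM.xD_none Y

lemma hospPart_zero (hM : IsExampleMarket M) (Y : Finset (Option (Fin k))) :
    hospPart M Y 0 = Y.erase none :=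
  filter_eq_erase_none hM.xH_some (by simp [hM.xH_none]) Y

lemma hospPart_one (hM : IsExampleMarket M) (Y : Finset (Option (Fin k))) :
    hospPart M Y 1 = Y ∩ {none} :=
  filter_eq_inter_none (by simp [hM.xH_some]) hM.xH_none Y

lemma Cd_zero_eq (hM : IsExampleMarket M) (h : pr.lt ∅ {some j})
    (hY : Y.erase none = {some j}) : Cd M pr 0 Y = {some j} := by
  rw [Cd, hM.docPart_zero, hY, bestAlloc_singleton_of_lt h]

lemma Ch_zero_eq (hM : IsExampleMarket M) (h : (M.prH 0).lt ∅ {some j})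
    (hY : Y.erase none = {some j}) : Ch M 0 Y = {some j} := by
  rw [Ch, hM.hospPart_zero, hY, bestAlloc_singleton_of_lt h]

lemma Cd_one_of_lt (hM : IsExampleMarket M) (h : pr.lt ∅ {none})
    (Y : Finset (Option (Fin k))) : Cd M pr 1 Y = Y ∩ {none} := by
  rw [Cd, hM.docPart_one, bestAlloc_inter_singleton_of_lt h]

lemma Cd_one_of_not_lt (hM : IsExampleMarket M) (h : ¬ pr.lt ∅ {none})
    (Y : Finset (Option (Fin k))) : Cd M pr 1 Y = ∅ := by
  rw [Cd, hM.docPart_one, bestAlloc_inter_singleton_of_not_lt h]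

lemma Ch_one (hM : IsExampleMarket M) (h : (M.prH 1).lt ∅ {none})
    (Y : Finset (Option (Fin k))) : Ch M 1 Y = Y ∩ {none} := by
  rw [Ch, hM.hospPart_one, bestAlloc_inter_singleton_of_lt h]

lemma not_blocks_some (hM : IsExampleMarket M)
    (hpr1 : ∀ i j : Fin k, i < j → (M.prH 0).lt {some i} {some j})
    (hpr1e : ∀ i : Fin k, (M.prH 0).lt ∅ {some i})
    (hP0 : ∀ i j : Fin k, i < j → (P 0).lt {some j} {some i})
    (hP0e : ∀ i : Fin k, (P 0).lt ∅ {some i})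
    (hY : Y.erase none = {some j}) (hi : some i ∉ Y) :
    ¬ (some i ∈ Cd M (P 0) 0 (insert (some i) Y) ∧ some i ∈ Ch M 0 (insert (some i) Y)) := by
  have hij : i ≠ j := by
    rintro rfl
    exact hi (mem_of_mem_erase (hY ▸ mem_singleton_self _))
  have hpair : (insert (some i) Y).erase none = {some i, some j} := by
    rw [erase_insert_of_ne (by simp), hY]
  have hD : ∀ x ∈ ({some i, some j} : Finset (Option (Fin k))), M.xD x = 0 := by
    simp [hM.xD_some]
  rintro ⟨hd, hh⟩
  rcases hij.lt_or_gt with hlt | hgt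
  · rw [Ch, hM.hospPart_zero, hpair, bestAlloc_eq_singleton hD (by simp) (hpr1e j)
      (by simp [@le_of_lt _ (M.prH 0).toPreorder _ _ (hpr1 i j hlt)])] at hh
    exact hij (by simpa using hh)
  · rw [Cd, hM.docPart_zero, hpair, bestAlloc_eq_singleton hD (by simp) (hP0e j)
      (by simp [@le_of_lt _ (P 0).toPreorder _ _ (hP0 j i hgt)])] at hd
    exact hij (by simpa using hd)

lemma exists_some_mem_of_isStable [NeZero k] (hM : IsExampleMarket M)
    (hpr1e : ∀ i : Fin k, (M.prH 0).lt ∅ {some i}) (hP0e : ∀ i : Fin k, (P 0).lt ∅ {some i})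
    (hY : IsStable M P Y) : ∃ j, some j ∈ Y := by
  by_contra! hno
  have hY0 : Y.erase none = ∅ := by
    ext (_ | i) <;> simp [hno]
  have h0 : (insert (some 0) Y).erase none = {some 0} := by
    rw [erase_insert_of_ne (by simp), hY0, insert_empty]
  refine hY.2.2.2 (some 0) (hno 0) ⟨?_, ?_⟩
  · rw [hM.xD_some, hM.Cd_zero_eq (hP0e 0) h0]
    exact mem_singleton_self _
  · rw [hM.xH_some, hM.Ch_zero_eq (hpr1e 0) h0]
    exact mem_singleton_self _

lemma erase_none_eq_of_isAllocation (hM : IsExampleMarket M) (hY : IsAllocation M Y)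
    (hj : some j ∈ Y) : Y.erase none = {some j} := by
  refine eq_singleton_iff_unique_mem.2 ⟨mem_erase.2 ⟨by simp, hj⟩, fun x hx => ?_⟩
  obtain ⟨hxn, hxY⟩ := mem_erase.1 hx
  obtain ⟨i, rfl⟩ := Option.ne_none_iff_exists'.1 hxn
  exact hY _ hxY _ hj (by rw [hM.xD_some, hM.xD_some])

lemma none_mem_iff_of_isStable (hM : IsExampleMarket M) (hpr2 : (M.prH 1).lt ∅ {none})
    (hY : IsStable M P Y) : none ∈ Y ↔ (P 1).lt ∅ {none} := by
  constructor
  · intro hn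
    by_contra hneg
    rw [← hY.2.1, CD_fin_two, hM.Cd_one_of_not_lt hneg, union_empty] at hn
    have hd1 : none ∈ docPart M Y 0 := bestAlloc_subset M (P 0) _ hn
    simp [hM.docPart_zero] at hd1
  · intro hpos
    by_contra hn
    refine hY.2.2.2 none hn ⟨?_, ?_⟩
    · rw [hM.xD_none, hM.Cd_one_of_lt hpos]
      simp
    · rw [hM.xH_none, hM.Ch_one hpr2]
      simp

lemma isStable_of_erase_none_eq (hM : IsExampleMarket M)
    (hpr1 : ∀ i j : Fin k, i < j → (M.prH 0).lt {some i} {some j})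
    (hpr1e : ∀ i : Fin k, (M.prH 0).lt ∅ {some i}) (hpr2 : (M.prH 1).lt ∅ {none})
    (hP0 : ∀ i j : Fin k, i < j → (P 0).lt {some j} {some i})
    (hP0e : ∀ i : Fin k, (P 0).lt ∅ {some i})
    (hj : Y.erase none = {some j}) (hnone : none ∈ Y ↔ (P 1).lt ∅ {none}) :
    IsStable M P Y := by
  have hY : Y = {some j} ∪ Y ∩ {none} := by
    rw [← hj, erase_eq, sdiff_union_inter]
  have hCd1 : Cd M (P 1) 1 Y = Y ∩ {none} := by
    by_cases hpos : (P 1).lt ∅ {none}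
    · exact hM.Cd_one_of_lt hpos Y
    · rw [hM.Cd_one_of_not_lt hpos, inter_singleton_of_notMem (mt hnone.1 hpos)]
  have hmem : ∀ x ∈ Y, x = some j ∨ x = none := fun x hx => by
    by_cases hxn : x = none
    · exact Or.inr hxn
    · exact Or.inl (mem_singleton.1 (hj ▸ mem_erase.2 ⟨hxn, hx⟩))
  refine ⟨fun x hx y hy hxy => ?_, ?_, ?_, ?_⟩
  · rcases hmem x hx with rfl | rfl <;> rcases hmem y hy with rfl | rfl <;>
      simp [hM.xD_some, hM.xD_none] at hxy ⊢
  · rw [CD_fin_two, hM.Cd_zero_eq (hP0e j) hj, hCd1, ← hY]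
  · rw [CH_fin_two, hM.Ch_zero_eq (hpr1e j) hj, hM.Ch_one hpr2, ← hY]
  · rintro (_ | i) hx
    · rw [hM.xD_none, hM.Cd_one_of_not_lt (mt hnone.2 hx)]
      simp
    · rw [hM.xD_some, hM.xH_some]
      exact hM.not_blocks_some hpr1 hpr1e hP0 hP0e hj hx

lemma isStable_iff [NeZero k] (hM : IsExampleMarket M)
    (hpr1 : ∀ i j : Fin k, i < j → (M.prH 0).lt {some i} {some j})
    (hpr1e : ∀ i : Fin k, (M.prH 0).lt ∅ {some i}) (hpr2 : (M.prH 1).lt ∅ {none})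
    (hP0 : ∀ i j : Fin k, i < j → (P 0).lt {some j} {some i})
    (hP0e : ∀ i : Fin k, (P 0).lt ∅ {some i}) :
    IsStable M P Y ↔ ∃ j, Y.erase none = {some j} ∧ (none ∈ Y ↔ (P 1).lt ∅ {none}) := by
  refine ⟨fun hY => ?_, fun ⟨j, hj, hnone⟩ =>
    hM.isStable_of_erase_none_eq hpr1 hpr1e hpr2 hP0 hP0e hj hnone⟩
  obtain ⟨j, hj⟩ := hM.exists_some_mem_of_isStable hpr1e hP0e hY
  exact ⟨j, hM.erase_none_eq_of_isAllocation hY.1 hj, hM.none_mem_iff_of_isStable hpr2 hY⟩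

end IsExampleMarket

/-- `x^{i+1}` is encoded as `some i` and `w` as `none`; `d₁, d₂` and `h₁, h₂` are
`0, 1 : Fin 2`. -/
theorem stableSet_characterization (k : ℕ) [NeZero k]
    (M : Market (Fin 2) (Fin 2) (Option (Fin k)))
    (hxDs : ∀ i : Fin k, M.xD (some i) = 0) (hxDw : M.xD none = 1)
    (hxHs : ∀ i : Fin k, M.xH (some i) = 0) (hxHw : M.xH none = 1)
    (hpr1 : ∀ i j : Fin k, i < j →
      (M.prH 0).lt ({some i} : Finset (Option (Fin k))) {some j})
    (hpr1e : ∀ i : Fin k, (M.prH 0).lt (∅ : Finset (Option (Fin k))) {some i})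
    (hpr2 : (M.prH 1).lt (∅ : Finset (Option (Fin k))) {none})
    (P1 : Pref (Option (Fin k)))
    (hP1 : ∀ i j : Fin k, i < j →
      P1.lt ({some j} : Finset (Option (Fin k))) {some i})
    (hP1e : ∀ i : Fin k, P1.lt (∅ : Finset (Option (Fin k))) {some i})
    (P2 : Pref (Option (Fin k))) :
    (P2.lt (∅ : Finset (Option (Fin k))) {none} →
      ∀ Y : Finset (Option (Fin k)),
        IsStable M ![P1, P2] Y ↔ ∃ j : Fin k, Y = {some j, none}) ∧
    (P2.lt ({none} : Finset (Option (Fin k))) ∅ →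
      ∀ Y : Finset (Option (Fin k)),
        IsStable M ![P1, P2] Y ↔ ∃ j : Fin k, Y = {some j}) := by
  have hM : IsExampleMarket M := ⟨hxDs, hxDw, hxHs, hxHw⟩
  have hstable (Y : Finset (Option (Fin k))) : IsStable M ![P1, P2] Y ↔
      ∃ j, Y.erase none = {some j} ∧ (none ∈ Y ↔ P2.lt ∅ {none}) :=
    hM.isStable_iff hpr1 hpr1e hpr2 hP1 hP1e
  refine ⟨fun hpos Y => ?_, fun hneg Y => ?_⟩
  · simp only [hstable, hpos, iff_true]
    exact exists_congr fun j => erase_eq_singleton_and_mem_iff (by simp)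
  · have hnpos : ¬ P2.lt ∅ {none} := @lt_asymm _ P2.toPreorder _ _ hneg
    simp only [hstable, hnpos, iff_false]
    exact exists_congr fun j => erase_eq_singleton_and_notMem_iff (by simp)

end Matching
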